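/- For all integers i ≥ 1 and j ≥ 1, the 3-adic valuation of m(i,j) satisfies ν_3(m(i,j)) ≥ ⌊(9j−3i−1)/2⌋; equivalently, whenever 9j−3i−1 ≥ 0, the integer m(i,j) is divisible by 3^{⌊(9j−3i−1)/2⌋}. -/

import Mathlib

/-!
Induction on `j`. Along the recurrence the exponent `(9j - 3i - 1)/2` grows by at most `3`, `2` and `0`
when passing from `m(i-1,j-1)`, `m(i-2,j-1)`, `m(i-3,j-1)` to `m(i,j)`, which the coefficients
`27 = 3^3`, `9 = 3^2` and `1 = 3^0` absorb; the first column is checked by hand.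
-/

/-- The matrix `m(i,j)` of Hirschhorn: `m(i,j) = 0` whenever `i = 0` or `j = 0`
(corresponding to nonpositive indices), `m(1,1) = 9`, `m(2,1) = 6`, `m(3,1) = 1`,
`m(i,1) = 0` for `i ≥ 4`, and for `j ≥ 2`,
`m(i,j) = 27·m(i-1,j-1) + 9·m(i-2,j-1) + m(i-3,j-1)`
(truncated subtraction correctly yields the prescribed value `0` at nonpositive
first arguments). -/
def mCoef : ℕ → ℕ → ℤ
  | _, 0 => 0
  | 0, _ => 0
  | 1, 1 => 9
  | 2, 1 => 6
  | 3, 1 => 1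
  | _ + 4, 1 => 0
  | i, j + 2 => 27 * mCoef (i - 1) (j + 1) + 9 * mCoef (i - 2) (j + 1) + mCoef (i - 3) (j + 1)

lemma pow_dvd_pow_mul_of_pow_dvd {M : Type*} [CommMonoid M] {p x : M} {a b k : ℕ}
    (hx : p ^ a ∣ x) (hb : b ≤ k + a) : p ^ b ∣ p ^ k * x :=
  (pow_dvd_pow p hb).trans (pow_add p k a ▸ mul_dvd_mul_left _ hx)

lemma mCoef_zero_left (j : ℕ) : mCoef 0 j = 0 := by
  cases j <;> simp [mCoef]

lemma mCoef_add_two (i j : ℕ) :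
    mCoef i (j + 2) = 3 ^ 3 * mCoef (i - 1) (j + 1) + 3 ^ 2 * mCoef (i - 2) (j + 1)
      + 3 ^ 0 * mCoef (i - 3) (j + 1) := by
  cases i <;> simp [mCoef, mCoef_zero_left]

/-- For `k > i` the truncated row `i - k` is row `0`, where `mCoef` vanishes. -/
lemma pow_dvd_pow_mul_mCoef_sub {i j k c n : ℕ}
    (hcol : ∀ i, (3 : ℤ) ^ ((9 * j - 3 * i - 1) / 2) ∣ mCoef i j)
    (hn : k ≤ i → n ≤ c + (9 * j - 3 * (i - k) - 1) / 2) :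
    (3 : ℤ) ^ n ∣ 3 ^ c * mCoef (i - k) j := by
  rcases le_or_gt k i with hki | hik
  · exact pow_dvd_pow_mul_of_pow_dvd (hcol _) (hn hki)
  · simp [Nat.sub_eq_zero_of_le hik.le, mCoef_zero_left]

lemma three_pow_dvd_mCoef_one : ∀ i : ℕ, (3 : ℤ) ^ ((9 * 1 - 3 * i - 1) / 2) ∣ mCoef i 1
  | 0 => by simp [mCoef]
  | 1 => by norm_num [mCoef]
  | 2 => by norm_num [mCoef]
  | 3 => by norm_num [mCoef]
  | _ + 4 => by simp [mCoef]

/-- `ν₃(m(i,j)) ≥ ⌊(9j - 3i - 1)/2⌋`: whenever `9j - 3i - 1 ≥ 0` (i.e. `3i + 1 ≤ 9j`),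
the integer `m(i,j)` is divisible by `3 ^ ⌊(9j - 3i - 1)/2⌋` (the floor here is the
natural-number division `(9j - 3i - 1)/2`, the subtractions being nonnegative); when
`9j - 3i - 1 < 0` the claimed bound on the 3-adic valuation holds trivially. -/
theorem mCoef_three_adic_bound (i j : ℕ) :
    (3 : ℤ) ^ ((9 * j - 3 * i - 1) / 2) ∣ mCoef i j :=
  match i, j with
  | _, 0 => by simp [mCoef]
  | i, 1 => three_pow_dvd_mCoef_one i
  | i, j + 2 => by
    have hcol := fun i => mCoef_three_adic_bound i (j + 1)
    rw [mCoef_add_two]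
    exact dvd_add (dvd_add (pow_dvd_pow_mul_mCoef_sub hcol (by omega))
      (pow_dvd_pow_mul_mCoef_sub hcol (by omega))) (pow_dvd_pow_mul_mCoef_sub hcol (by omega))
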